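/- arXiv:2302.09535 — 7 statements merged into one kernel-verified Lean document; each statement's English description precedes it below -/
import Mathlib

section
/- Let O be a commutative ring, α, β ∈ O with αβ = 2, and let δ : S → S be an O-linear map on a commutative O-algebra S satisfying δ(st) = δ(s)t + sδ(t) + αδ(s)δ(t) and δ∘δ = −βδ. For u, v ∈ S define x := u(u + αδ(u)), y := v(v + αδ(v)), z := βuv + δ(u)v + uδ(v), a := βu + δ(u), b := βv + δ(v). Then x, y, z, a, b are all fixed by δ (i.e. δ(x) = δ(y) = δ(z) = δ(a) = δ(b) = 0). -/
/-!
Expanding with the twisted Leibniz rule and `δ ∘ δ = -β δ`, each of `δ x`, `δ y`, `δ z` becomes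
a multiple of `α β - 2`, while `δ (β u + δ u) = β δ u - β δ u` vanishes identically.
-/

section TwistedDerivation

variable {O S : Type*} [CommRing O] [CommRing S] [Algebra O S] {α β : O} {δ : S →ₗ[O] S}

theorem delta_smul_add_delta_eq_zero (hcomp : ∀ s : S, δ (δ s) = -(β • δ s)) (s : S) :
    δ (β • s + δ s) = 0 := by
  rw [map_add, map_smul, hcomp, add_neg_cancel]

section

variable (hαβ : α * β = 2)
    (hmul : ∀ s t : S, δ (s * t) = δ s * t + s * δ t + α • (δ s * δ t))
    (hcomp : ∀ s : S, δ (δ s) = -(β • δ s))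
include hαβ hmul hcomp

theorem delta_mul_add_smul_delta_eq_zero (s : S) : δ (s * (s + α • δ s)) = 0 := by
  have h2 : algebraMap O S α * algebraMap O S β = 2 := by rw [← map_mul, hαβ, map_ofNat]
  simp only [hmul, map_add, map_smul, hcomp]
  simp only [Algebra.smul_def]
  linear_combination (-(δ s * s) - algebraMap O S α * δ s ^ 2) * h2

theorem delta_smul_mul_add_eq_zero (s t : S) : δ (β • (s * t) + δ s * t + s * δ t) = 0 := by
  have h2 : algebraMap O S α * algebraMap O S β = 2 := by rw [← map_mul, hαβ, map_ofNat]
  simp only [hmul, map_add, map_smul, hcomp]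
  simp only [Algebra.smul_def]
  linear_combination (-(δ s * δ t)) * h2

end

end TwistedDerivation

/-- With `δ` encoding a `G_{α,β}`-action on `Spec S` (so `α * β = 2`,
twisted Leibniz rule, `δ ∘ δ = -β • δ`), the elements
`x = u(u + αδu)`, `y = v(v + αδv)`, `z = βuv + δ(u)v + uδ(v)`,
`a = βu + δu`, `b = βv + δv` are all killed by `δ` (i.e. invariant). -/
theorem stmt1 (O S : Type*) [CommRing O] [CommRing S] [Algebra O S]
    (α β : O) (hαβ : α * β = 2) (δ : S →ₗ[O] S)
    (hmul : ∀ s t : S, δ (s * t) = δ s * t + s * δ t + α • (δ s * δ t))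
    (hcomp : ∀ s : S, δ (δ s) = -(β • δ s))
    (u v : S)
    (x : S) (hx : x = u * (u + α • δ u))
    (y : S) (hy : y = v * (v + α • δ v))
    (z : S) (hz : z = β • (u * v) + δ u * v + u * δ v)
    (a : S) (ha : a = β • u + δ u)
    (b : S) (hb : b = β • v + δ v) :
    δ x = 0 ∧ δ y = 0 ∧ δ z = 0 ∧ δ a = 0 ∧ δ b = 0 := by
  subst hx hy hz ha hb
  exact ⟨delta_mul_add_smul_delta_eq_zero hαβ hmul hcomp u,
    delta_mul_add_smul_delta_eq_zero hαβ hmul hcomp v,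
    delta_smul_mul_add_eq_zero hαβ hmul hcomp u v,
    delta_smul_add_delta_eq_zero hcomp u, delta_smul_add_delta_eq_zero hcomp v⟩
end

section
/- Let O be a commutative ring, α, β ∈ O with αβ = 2, let S be a commutative O-algebra with δ : S → S satisfying δ(st) = δ(s)t + sδ(t) + αδ(s)δ(t) and δ∘δ = −βδ. For u, v ∈ S define x, y, z, a, b as before, and set z' := z + αδ(u)δ(v). Then z + z' = αab and z·z' = a²y + b²x − β²xy; consequently z² − αabz + a²y + b²x − β²xy = 0. -/
/-! Writing `p = δ u`, `q = δ v`, both identities are polynomial identities in `u, v, p, q`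
modulo `α β = 2`: expanding, every discrepancy is a multiple of `α β − 2`. So `z` and `z'` are
the two roots of `T² − α a b T + (a² y + b² x − β² x y)`, which is the relation. -/

section TateOortRelation

variable {O S : Type*} [CommRing O] [CommRing S] [Algebra O S] {α β : O}

theorem algebraMap_mul_algebraMap_eq_two (hαβ : α * β = 2) :
    algebraMap O S α * algebraMap O S β = 2 := by
  rw [← map_mul, hαβ, map_ofNat]

theorem add_conj_eq_smul_mul (hαβ : α * β = 2) (u v p q : S) :
    (β • (u * v) + p * v + u * q) + (β • (u * v) + p * v + u * q + α • (p * q)) =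
      α • ((β • u + p) * (β • v + q)) := by
  simp only [Algebra.smul_def]
  linear_combination (-(algebraMap O S β * (u * v) + p * v + u * q)) *
    algebraMap_mul_algebraMap_eq_two (S := S) hαβ

theorem mul_conj_eq (hαβ : α * β = 2) (u v p q : S) :
    (β • (u * v) + p * v + u * q) * (β • (u * v) + p * v + u * q + α • (p * q)) =
      (β • u + p) ^ 2 * (v * (v + α • q)) + (β • v + q) ^ 2 * (u * (u + α • p)) -
        β ^ 2 • (u * (u + α • p) * (v * (v + α • q))) := by
  simp only [Algebra.smul_def, map_pow]
  linear_combination (u * v * p * q * (algebraMap O S α * algebraMap O S β - 1)) *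
    algebraMap_mul_algebraMap_eq_two (S := S) hαβ

end TateOortRelation

theorem stmt2_general (O S : Type*) [CommRing O] [CommRing S] [Algebra O S]
    (α β : O) (hαβ : α * β = 2) (δ : S →ₗ[O] S)
    (u v : S)
    (x : S) (hx : x = u * (u + α • δ u))
    (y : S) (hy : y = v * (v + α • δ v))
    (z : S) (hz : z = β • (u * v) + δ u * v + u * δ v)
    (a : S) (ha : a = β • u + δ u)
    (b : S) (hb : b = β • v + δ v)
    (z' : S) (hz' : z' = z + α • (δ u * δ v)) :
    z + z' = α • (a * b) ∧
    z * z' = a ^ 2 * y + b ^ 2 * x - (β ^ 2) • (x * y) ∧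
    z ^ 2 - α • (a * b * z) + a ^ 2 * y + b ^ 2 * x - (β ^ 2) • (x * y) = 0 := by
  have hsum : z + z' = α • (a * b) := by
    subst hz hz' ha hb
    exact add_conj_eq_smul_mul hαβ u v (δ u) (δ v)
  have hprod : z * z' = a ^ 2 * y + b ^ 2 * x - (β ^ 2) • (x * y) := by
    subst hx hy hz hz' ha hb
    exact mul_conj_eq hαβ u v (δ u) (δ v)
  refine ⟨hsum, hprod, ?_⟩
  rw [← smul_mul_assoc, ← hsum]
  linear_combination -hprod

/-- With notation as in the Tate–Oort quotient construction, setting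
`z' = z + α δ(u) δ(v)` one has `z + z' = α a b` and `z z' = a² y + b² x − β² x y`,
hence the relation `z² − α a b z + a² y + b² x − β² x y = 0`. -/
theorem stmt2 (O S : Type*) [CommRing O] [CommRing S] [Algebra O S]
    (α β : O) (hαβ : α * β = 2) (δ : S →ₗ[O] S)
    (hmul : ∀ s t : S, δ (s * t) = δ s * t + s * δ t + α • (δ s * δ t))
    (hcomp : ∀ s : S, δ (δ s) = -(β • δ s))
    (u v : S)
    (x : S) (hx : x = u * (u + α • δ u))
    (y : S) (hy : y = v * (v + α • δ v))
    (z : S) (hz : z = β • (u * v) + δ u * v + u * δ v)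
    (a : S) (ha : a = β • u + δ u)
    (b : S) (hb : b = β • v + δ v)
    (z' : S) (hz' : z' = z + α • (δ u * δ v)) :
    z + z' = α • (a * b) ∧
    z * z' = a ^ 2 * y + b ^ 2 * x - (β ^ 2) • (x * y) ∧
    z ^ 2 - α • (a * b * z) + a ^ 2 * y + b ^ 2 * x - (β ^ 2) • (x * y) = 0 :=
  stmt2_general O S α β hαβ δ u v x hx y hy z hz a ha b hb z' hz'
end

section
/- Let k be an algebraically closed field of characteristic 2. A point (t₀ : t₁ : t₂ : t₃) ∈ P³(k) lies in Γ₁ ∩ Γ₂ if and only if it lies in Γ₁ and all its coordinates can be chosen in the subfield F₄ ⊆ k, i.e. Γ₁ ∩ Γ₂ = Γ₁(F₄). -/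
/-!
Both curves are cut out by homogeneous quadrics, so they are stable under scaling. On `Γ₁` the
vanishing of `t₀` forces `t₁ = t₂ = 0`, and otherwise one may normalise `t₀ = 1`; then `Γ₁ ∩ Γ₂`
reads `t₂ = t₁²`, `t₁ = t₂²`, `t₃ = t₁t₂`, which gives `x⁴ = x` for every coordinate. Conversely,
on `Γ₁` the condition `x⁴ = x` forces `t₀³ = 1` when `t₀ ≠ 0`, and this turns the equations of
`Γ₁` into those of `Γ₂`.
-/

def twistedCubic₁ (k : Type*) [CommRing k] : Set (Fin 4 → k) :=
  {t | t 1 * t 2 - t 0 * t 3 = 0 ∧ (t 1) ^ 2 - t 0 * t 2 = 0 ∧ (t 2) ^ 2 - t 1 * t 3 = 0}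

def twistedCubic₂ (k : Type*) [CommRing k] : Set (Fin 4 → k) :=
  {t | t 1 * t 2 - t 0 * t 3 = 0 ∧ (t 2) ^ 2 - t 0 * t 1 = 0 ∧ (t 1) ^ 2 - t 2 * t 3 = 0}

section Domain

variable {k : Type*} [CommRing k] [IsDomain k] {c : k} {t : Fin 4 → k}

theorem smul_quadric_eq_zero_iff (hc : c ≠ 0) (x y z w : k) :
    c * x * (c * y) - c * z * (c * w) = 0 ↔ x * y - z * w = 0 := by
  rw [mul_mul_mul_comm, mul_mul_mul_comm c z, ← mul_sub, mul_eq_zero,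
    or_iff_right (mul_ne_zero hc hc)]

theorem smul_mem_twistedCubic₁_iff (hc : c ≠ 0) :
    c • t ∈ twistedCubic₁ k ↔ t ∈ twistedCubic₁ k := by
  simp only [twistedCubic₁, Set.mem_ofPred_eq, Pi.smul_apply, smul_eq_mul, sq,
    smul_quadric_eq_zero_iff hc]

theorem smul_mem_twistedCubic₂_iff (hc : c ≠ 0) :
    c • t ∈ twistedCubic₂ k ↔ t ∈ twistedCubic₂ k := by
  simp only [twistedCubic₂, Set.mem_ofPred_eq, Pi.smul_apply, smul_eq_mul, sq,
    smul_quadric_eq_zero_iff hc]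

theorem apply_one_eq_zero_and_apply_two_eq_zero (h₁ : t ∈ twistedCubic₁ k) (h0 : t 0 = 0) :
    t 1 = 0 ∧ t 2 = 0 := by
  obtain ⟨-, h₂, h₃⟩ := h₁
  have h1 : t 1 = 0 := pow_eq_zero_iff two_ne_zero |>.mp (by linear_combination h₂ + t 2 * h0)
  exact ⟨h1, pow_eq_zero_iff two_ne_zero |>.mp (by linear_combination h₃ + t 3 * h1)⟩

theorem mem_twistedCubic₂_of_pow_four_eq_self (h₁ : t ∈ twistedCubic₁ k)
    (hF : ∀ i, t i ^ 4 = t i) : t ∈ twistedCubic₂ k := by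
  by_cases h0 : t 0 = 0
  · obtain ⟨h1, h2⟩ := apply_one_eq_zero_and_apply_two_eq_zero h₁ h0
    exact ⟨h₁.1, by simp [h0, h1, h2], by simp [h1, h2]⟩
  obtain ⟨e₁, e₂, -⟩ := h₁
  have hcube : t 0 ^ 3 = 1 := mul_left_cancel₀ h0 (by linear_combination hF 0)
  have f₂ : t 2 ^ 2 - t 0 * t 1 = 0 := by
    linear_combination -t 0 * (t 1 ^ 2 + t 0 * t 2) * e₂ + t 0 * hF 1 - t 2 ^ 2 * hcube
  refine ⟨e₁, f₂, (mul_eq_zero.mp ?_).resolve_left h0⟩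
  linear_combination t 2 * e₁ - t 1 * f₂

end Domain

section Field

variable {k : Type*} [Field k] {t : Fin 4 → k}

theorem pow_four_eq_self_of_apply_zero_eq_one (h₁ : t ∈ twistedCubic₁ k)
    (h₂ : t ∈ twistedCubic₂ k) (h0 : t 0 = 1) (i : Fin 4) : t i ^ 4 = t i := by
  obtain ⟨e₁, e₂, -⟩ := h₁
  obtain ⟨-, f₂, -⟩ := h₂
  rw [h0, one_mul] at e₁ e₂ f₂
  have h1 : t 1 ^ 4 = t 1 := by linear_combination (t 1 ^ 2 + t 2) * e₂ + f₂
  have h2 : t 2 ^ 4 = t 2 := by linear_combination (t 2 ^ 2 + t 1) * f₂ + e₂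
  have h3 : t 3 = t 1 * t 2 := by linear_combination -e₁
  fin_cases i <;> simp only [Fin.zero_eta, Fin.mk_one, Fin.reduceFinMk]
  · rw [h0, one_pow]
  · exact h1
  · exact h2
  · rw [h3, mul_pow, h1, h2]

theorem exists_smul_pow_four_eq_self (h₁ : t ∈ twistedCubic₁ k) (h₂ : t ∈ twistedCubic₂ k)
    (ht : t ≠ 0) : ∃ c : k, c ≠ 0 ∧ ∀ i, (c * t i) ^ 4 = c * t i := by
  by_cases h0 : t 0 = 0
  · obtain ⟨h1, h2⟩ := apply_one_eq_zero_and_apply_two_eq_zero h₁ h0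
    have h3 : t 3 ≠ 0 := fun h3 => ht (by ext i; fin_cases i <;> assumption)
    refine ⟨(t 3)⁻¹, inv_ne_zero h3, fun i => ?_⟩
    fin_cases i <;> simp [h0, h1, h2, h3]
  · exact ⟨(t 0)⁻¹, inv_ne_zero h0, pow_four_eq_self_of_apply_zero_eq_one
      ((smul_mem_twistedCubic₁_iff (inv_ne_zero h0)).2 h₁)
      ((smul_mem_twistedCubic₂_iff (inv_ne_zero h0)).2 h₂) (inv_mul_cancel₀ h0)⟩

end Field

theorem stmt6_general (k : Type*) [Field k]
    (Γ₁ Γ₂ : Set (Fin 4 → k))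
    (hΓ₁ : Γ₁ = {t | t 1 * t 2 - t 0 * t 3 = 0 ∧ (t 1) ^ 2 - t 0 * t 2 = 0 ∧
      (t 2) ^ 2 - t 1 * t 3 = 0})
    (hΓ₂ : Γ₂ = {t | t 1 * t 2 - t 0 * t 3 = 0 ∧ (t 2) ^ 2 - t 0 * t 1 = 0 ∧
      (t 1) ^ 2 - t 2 * t 3 = 0})
    (t : Fin 4 → k) (ht : t ≠ 0) :
    (t ∈ Γ₁ ∩ Γ₂) ↔ (t ∈ Γ₁ ∧ ∃ c : k, c ≠ 0 ∧ ∀ i, (c * t i) ^ 4 = c * t i) := by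
  obtain rfl : Γ₁ = twistedCubic₁ k := hΓ₁
  obtain rfl : Γ₂ = twistedCubic₂ k := hΓ₂
  refine ⟨fun ⟨h₁, h₂⟩ => ⟨h₁, exists_smul_pow_four_eq_self h₁ h₂ ht⟩, ?_⟩
  rintro ⟨h₁, c, hc, hF⟩
  refine ⟨h₁, (smul_mem_twistedCubic₂_iff hc).1 ?_⟩
  exact mem_twistedCubic₂_of_pow_four_eq_self ((smul_mem_twistedCubic₁_iff hc).2 h₁) hF

/-- Over an algebraically closed field `k` of characteristic 2, a point of
`P³(k)` (given by a nonzero coordinate vector `t`) lies on `Γ₁ ∩ Γ₂` if and only if it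
lies on `Γ₁` and its coordinates can be simultaneously rescaled to lie in the subfield
`F₄ ⊆ k` (the set of solutions of `x⁴ = x`); i.e. `Γ₁ ∩ Γ₂ = Γ₁(F₄)`. -/
theorem stmt6 (k : Type*) [Field k] [IsAlgClosed k] [CharP k 2]
    (Γ₁ Γ₂ : Set (Fin 4 → k))
    (hΓ₁ : Γ₁ = {t | t 1 * t 2 - t 0 * t 3 = 0 ∧ (t 1) ^ 2 - t 0 * t 2 = 0 ∧
      (t 2) ^ 2 - t 1 * t 3 = 0})
    (hΓ₂ : Γ₂ = {t | t 1 * t 2 - t 0 * t 3 = 0 ∧ (t 2) ^ 2 - t 0 * t 1 = 0 ∧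
      (t 1) ^ 2 - t 2 * t 3 = 0})
    (t : Fin 4 → k) (ht : t ≠ 0) :
    (t ∈ Γ₁ ∩ Γ₂) ↔ (t ∈ Γ₁ ∧ ∃ c : k, c ≠ 0 ∧ ∀ i, (c * t i) ^ 4 = c * t i) :=
  stmt6_general k Γ₁ Γ₂ hΓ₁ hΓ₂ t ht
end

section
/- Let k be an algebraically closed field of characteristic 2 and let F = z² + x⁴y + xy⁴ + b₀²x³ + a₀²x²y + b₁²xy² + a₁²y³ ∈ k[x,y,z] with a₀, a₁, b₀, b₁ ∈ k not all zero. If a₀a₁ − b₀b₁ ≠ 0 (i.e. the point (b₀ : a₀ : b₁ : a₁) does not lie on the quadric t₁t₂ − t₀t₃ = 0), then the origin is a singular point of the surface F = 0 with Tyurina algebra k[x,y,z]/(F, F_x, F_y, F_z) of dimension 8 over k, i.e. the origin is a rational double point of type D₄⁰. -/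
open MvPolynomial

/-
In characteristic 2 one has `F_z = 0` and `F = z² + x F_x + y F_y`, so the Tyurina ideal is
`(z², F_x, F_y)`. Both `F_x = b₀² x² + (b₁² + y²) y²` and `F_y = (a₀² + x²) x² + a₁² y²` are
combinations of `x², y²` whose coefficient matrix has determinant with constant term
`(a₀ b₁ - b₀ a₁)²`, a unit in `k[[x, y, z]]`. Hence the Tyurina ideal is `(x², y², z²)`, and the
quotient has the basis `xⁱ yʲ zˡ` with `i, j, l ≤ 1`.
-/

theorem Ideal.span_pair_eq_of_isUnit_det {R : Type*} [CommRing R] {p q r s u v : R}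
    (h : IsUnit (p * s - q * r)) :
    Ideal.span {p * u + q * v, r * u + s * v} = Ideal.span {u, v} := by
  apply le_antisymm <;> rw [Ideal.span_le, Set.insert_subset_iff, Set.singleton_subset_iff]
  · exact ⟨Ideal.mem_span_pair.mpr ⟨p, q, rfl⟩, Ideal.mem_span_pair.mpr ⟨r, s, rfl⟩⟩
  · have hinv := h.val_inv_mul
    exact ⟨Ideal.mem_span_pair.mpr ⟨↑h.unit⁻¹ * s, -↑h.unit⁻¹ * q, by linear_combination u * hinv⟩,
      Ideal.mem_span_pair.mpr ⟨-↑h.unit⁻¹ * r, ↑h.unit⁻¹ * p, by linear_combination v * hinv⟩⟩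

theorem Ideal.span_insert_add_of_mem {R : Type*} [CommRing R] {s : Set R} {w t : R}
    (ht : t ∈ Ideal.span s) : Ideal.span (insert (w + t) s) = Ideal.span (insert w s) := by
  have hs (p : R) : Ideal.span s ≤ Ideal.span (insert p s) :=
    Ideal.span_mono (Set.subset_insert _ _)
  apply le_antisymm <;> refine Ideal.span_le.mpr
    (Set.insert_subset_iff.mpr ⟨?_, (Set.subset_insert _ _).trans Ideal.subset_span⟩)
  · exact add_mem (Ideal.subset_span (Set.mem_insert _ _)) (hs _ ht)
  · simpa using sub_mem (Ideal.subset_span (Set.mem_insert _ _)) (hs (w + t) ht)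

namespace MvPowerSeries

variable {σ R : Type*} [CommRing R]

theorem mem_span_image_X_pow_of_coeff_eq_zero {n : ℕ} (s : Finset σ) {f : MvPowerSeries σ R}
    (hf : ∀ m : σ →₀ ℕ, (∀ i ∈ s, m i < n) → coeff m f = 0) :
    f ∈ Ideal.span ((fun i => X i ^ n) '' s) := by
  classical
  induction s using Finset.induction_on generalizing f with
  | empty =>
    convert Ideal.zero_mem _
    ext m
    simpa using hf m
  | insert a s _ ih =>
    let g : MvPowerSeries σ R := fun m => if m a < n then coeff m f else 0
    have hg : g ∈ Ideal.span ((fun i => X i ^ n) '' s) := ih fun m hm => by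
      change (if m a < n then coeff m f else 0) = 0
      split_ifs with ha
      · exact hf m (by simpa [ha] using hm)
      · rfl
    have hdvd : X a ^ n ∣ f - g := X_pow_dvd_iff.mpr fun m hm => by
      change coeff m f - (if m a < n then coeff m f else 0) = 0
      simp [hm]
    rw [← add_sub_cancel g f, Finset.coe_insert, Set.image_insert_eq]
    exact Ideal.add_mem _ (Ideal.span_mono (Set.subset_insert _ _) hg)
      (Ideal.span_mono (Set.singleton_subset_iff.mpr (Set.mem_insert _ _))
        (Ideal.mem_span_singleton.mpr hdvd))

variable [Fintype σ]

theorem mem_span_X_pow_iff {n : ℕ} {f : MvPowerSeries σ R} :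
    f ∈ Ideal.span (Set.range fun i => X i ^ n) ↔
      ∀ m : σ →₀ ℕ, (∀ i, m i < n) → coeff m f = 0 := by
  constructor
  · rintro hf m hm
    obtain ⟨c, rfl⟩ := (Ideal.mem_span_range_iff_exists_fun).mp hf
    rw [map_sum]
    exact Finset.sum_eq_zero fun i _ => X_pow_dvd_iff.mp (dvd_mul_left _ _) m (hm i)
  · intro hf
    simpa using mem_span_image_X_pow_of_coeff_eq_zero (n := n) Finset.univ (by simpa using hf)

noncomputable def boxExponent {n : ℕ} (e : σ → Fin n) : σ →₀ ℕ :=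
  Finsupp.equivFunOnFinite.symm fun i => e i

noncomputable def boxCoeff (n : ℕ) : MvPowerSeries σ R →ₗ[R] (σ → Fin n) → R :=
  LinearMap.pi fun e => coeff (boxExponent e)

theorem boxCoeff_apply {n : ℕ} (f : MvPowerSeries σ R) (e : σ → Fin n) :
    boxCoeff n f e = coeff (boxExponent e) f :=
  rfl

theorem boxCoeff_surjective (n : ℕ) : Function.Surjective (boxCoeff (σ := σ) (R := R) n) := by
  classical
  intro h
  refine ⟨∑ e, monomial (boxExponent e) (h e), funext fun e => ?_⟩
  have hinj : Function.Injective (boxExponent (σ := σ) (n := n)) := fun e e' he =>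
    funext fun i => Fin.ext (DFunLike.congr_fun he i)
  simp [boxCoeff, coeff_monomial, hinj.eq_iff]

theorem ker_boxCoeff (n : ℕ) : LinearMap.ker (boxCoeff (σ := σ) (R := R) n) =
    (Ideal.span (Set.range fun i => X i ^ n)).restrictScalars R := by
  ext f
  rw [Submodule.restrictScalars_mem, mem_span_X_pow_iff, LinearMap.mem_ker, funext_iff]
  refine ⟨fun hf m hm => ?_, fun hf e => hf _ fun i => (e i).isLt⟩
  have hm' : boxExponent (fun i => ⟨m i, hm i⟩ : σ → Fin n) = m := Finsupp.ext fun i => rfl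
  simpa [boxCoeff_apply, hm'] using hf fun i => ⟨m i, hm i⟩

theorem finrank_quotient_span_X_pow [Nontrivial R] (n : ℕ) :
    Module.finrank R
      (MvPowerSeries σ R ⧸ Ideal.span (Set.range fun i => (X i : MvPowerSeries σ R) ^ n)) =
      n ^ Fintype.card σ := by
  classical
  rw [← (Submodule.Quotient.restrictScalarsEquiv R
    (Ideal.span (Set.range fun i : σ => (X i : MvPowerSeries σ R) ^ n))).finrank_eq, ← ker_boxCoeff,
    (LinearMap.quotKerEquivOfSurjective _ (boxCoeff_surjective n)).finrank_eq,
    Module.finrank_fintype_fun_eq_card, Fintype.card_fun, Fintype.card_fin]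

end MvPowerSeries

section D4Poly

variable {k : Type*} [CommRing k]

noncomputable def d4Poly (a₀ a₁ b₀ b₁ : k) : MvPolynomial (Fin 3) k :=
  X 2 ^ 2 + X 0 ^ 4 * X 1 + X 0 * X 1 ^ 4 + C (b₀ ^ 2) * X 0 ^ 3
      + C (a₀ ^ 2) * X 0 ^ 2 * X 1 + C (b₁ ^ 2) * X 0 * X 1 ^ 2 + C (a₁ ^ 2) * X 1 ^ 3

variable [CharP k 2] (a₀ a₁ b₀ b₁ : k)

theorem pderiv_zero_d4Poly :
    pderiv 0 (d4Poly a₀ a₁ b₀ b₁) = X 1 ^ 4 + C (b₀ ^ 2) * X 0 ^ 2 + C (b₁ ^ 2) * X 1 ^ 2 := by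
  have h2 : (2 : MvPolynomial (Fin 3) k) = 0 := CharTwo.two_eq_zero
  simp [d4Poly, pderiv_X]
  linear_combination (2 * X 0^3 * X 1 + C b₀^2 * X 0^2 + C a₀^2 * X 0 * X 1) * h2

theorem pderiv_one_d4Poly :
    pderiv 1 (d4Poly a₀ a₁ b₀ b₁) = X 0 ^ 4 + C (a₀ ^ 2) * X 0 ^ 2 + C (a₁ ^ 2) * X 1 ^ 2 := by
  have h2 : (2 : MvPolynomial (Fin 3) k) = 0 := CharTwo.two_eq_zero
  simp [d4Poly, pderiv_X]
  linear_combination (2 * X 0 * X 1^3 + C b₁^2 * X 0 * X 1 + C a₁^2 * X 1^2) * h2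

theorem pderiv_two_d4Poly : pderiv 2 (d4Poly a₀ a₁ b₀ b₁) = 0 := by
  have h2 : (2 : MvPolynomial (Fin 3) k) = 0 := CharTwo.two_eq_zero
  simp [d4Poly, pderiv_X]
  linear_combination h2

-- Euler's identity: `d4Poly - z²` is a sum of forms in `x, y` of odd degrees 3 and 5.
theorem d4Poly_eq_euler : d4Poly a₀ a₁ b₀ b₁ =
    X 2 ^ 2 + X 0 * pderiv 0 (d4Poly a₀ a₁ b₀ b₁) + X 1 * pderiv 1 (d4Poly a₀ a₁ b₀ b₁) := by
  rw [pderiv_zero_d4Poly, pderiv_one_d4Poly, d4Poly]; ring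

end D4Poly

section TyurinaIdeal

variable {k : Type*} [Field k] [CharP k 2] {a₀ a₁ b₀ b₁ : k}

theorem span_pderiv_d4Poly_eq_span_X_sq (h : a₀ * b₁ - b₀ * a₁ ≠ 0) :
    Ideal.span
      {((pderiv 0 (d4Poly a₀ a₁ b₀ b₁) : MvPolynomial (Fin 3) k) : MvPowerSeries (Fin 3) k),
        ((pderiv 1 (d4Poly a₀ a₁ b₀ b₁) : MvPolynomial (Fin 3) k) : MvPowerSeries (Fin 3) k)} =
      Ideal.span {MvPowerSeries.X 0 ^ 2, MvPowerSeries.X 1 ^ 2} := by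
  set c : k → MvPowerSeries (Fin 3) k := fun a => MvPowerSeries.C (a ^ 2)
  set x : MvPowerSeries (Fin 3) k := MvPowerSeries.X 0
  set y : MvPowerSeries (Fin 3) k := MvPowerSeries.X 1
  have hFx : ((pderiv 0 (d4Poly a₀ a₁ b₀ b₁) : MvPolynomial (Fin 3) k) : MvPowerSeries (Fin 3) k) =
      c b₀ * x ^ 2 + (c b₁ + y ^ 2) * y ^ 2 := by
    rw [pderiv_zero_d4Poly]; push_cast; ring
  have hFy : ((pderiv 1 (d4Poly a₀ a₁ b₀ b₁) : MvPolynomial (Fin 3) k) : MvPowerSeries (Fin 3) k) =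
      (c a₀ + x ^ 2) * x ^ 2 + c a₁ * y ^ 2 := by
    rw [pderiv_one_d4Poly]; push_cast; ring
  have hdet : IsUnit (c b₀ * c a₁ - (c b₁ + y ^ 2) * (c a₀ + x ^ 2)) := by
    rw [MvPowerSeries.isUnit_iff_constantCoeff]
    simp only [c, x, y, map_sub, map_mul, map_add, map_pow, MvPowerSeries.constantCoeff_C,
      MvPowerSeries.constantCoeff_X]
    refine (?_ : _ ≠ (0 : k)).isUnit
    convert pow_ne_zero 2 h using 1
    linear_combination (a₀ * b₁ * b₀ * a₁ - a₀ ^ 2 * b₁ ^ 2) * (CharTwo.two_eq_zero : (2 : k) = 0)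
  rw [hFx, hFy]
  exact Ideal.span_pair_eq_of_isUnit_det hdet

theorem span_d4Poly_pderiv_eq_span_X_sq (h : a₀ * b₁ - b₀ * a₁ ≠ 0) :
    Ideal.span {(d4Poly a₀ a₁ b₀ b₁ : MvPowerSeries (Fin 3) k),
      ((pderiv 0 (d4Poly a₀ a₁ b₀ b₁) : MvPolynomial (Fin 3) k) : MvPowerSeries (Fin 3) k),
      ((pderiv 1 (d4Poly a₀ a₁ b₀ b₁) : MvPolynomial (Fin 3) k) : MvPowerSeries (Fin 3) k),
      ((pderiv 2 (d4Poly a₀ a₁ b₀ b₁) : MvPolynomial (Fin 3) k) : MvPowerSeries (Fin 3) k)} =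
      Ideal.span (Set.range fun i => (MvPowerSeries.X i : MvPowerSeries (Fin 3) k) ^ 2) := by
  have hF := congrArg (fun p : MvPolynomial (Fin 3) k => (p : MvPowerSeries (Fin 3) k))
    (d4Poly_eq_euler a₀ a₁ b₀ b₁)
  push_cast at hF
  rw [pderiv_two_d4Poly, coe_zero, Set.pair_comm, Set.insert_comm _ 0, Set.insert_comm _ 0,
    Ideal.span_insert_zero, hF, add_assoc,
    Ideal.span_insert_add_of_mem (Ideal.mem_span_pair.mpr ⟨_, _, rfl⟩), Ideal.span_insert,
    span_pderiv_d4Poly_eq_span_X_sq h, ← Ideal.span_insert]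
  congr 1
  ext p
  simp only [Set.mem_insert_iff, Set.mem_singleton_iff, Set.mem_range, eq_comm,
    Fin.exists_fin_succ, Fin.succ_zero_eq_one, Fin.succ_one_eq_two, IsEmpty.exists_iff, or_false]
  tauto

end TyurinaIdeal

theorem stmt7_general (k : Type*) [Field k] [CharP k 2]
    (a₀ a₁ b₀ b₁ : k)
    (hquad : a₀ * b₁ - b₀ * a₁ ≠ 0)
    (F : MvPolynomial (Fin 3) k)
    (hF : F = X 2 ^ 2 + X 0 ^ 4 * X 1 + X 0 * X 1 ^ 4 + C (b₀ ^ 2) * X 0 ^ 3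
      + C (a₀ ^ 2) * X 0 ^ 2 * X 1 + C (b₁ ^ 2) * X 0 * X 1 ^ 2 + C (a₁ ^ 2) * X 1 ^ 3) :
    (eval (0 : Fin 3 → k) F = 0 ∧ ∀ i, eval (0 : Fin 3 → k) (pderiv i F) = 0) ∧
    Module.finrank k
      (MvPowerSeries (Fin 3) k ⧸
        Ideal.span {(F : MvPowerSeries (Fin 3) k),
          ((pderiv 0 F : MvPolynomial (Fin 3) k) : MvPowerSeries (Fin 3) k),
          ((pderiv 1 F : MvPolynomial (Fin 3) k) : MvPowerSeries (Fin 3) k),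
          ((pderiv 2 F : MvPolynomial (Fin 3) k) : MvPowerSeries (Fin 3) k)}) = 8 := by
  obtain rfl : F = d4Poly a₀ a₁ b₀ b₁ := hF
  refine ⟨⟨by simp [d4Poly], fun i => ?_⟩, ?_⟩
  · fin_cases i <;> simp [pderiv_zero_d4Poly, pderiv_one_d4Poly, pderiv_two_d4Poly]
  · rw [span_d4Poly_pderiv_eq_span_X_sq hquad, MvPowerSeries.finrank_quotient_span_X_pow]
    rfl

/-- Over an algebraically closed field `k` of characteristic 2, for
`F = z² + x⁴y + xy⁴ + b₀²x³ + a₀²x²y + b₁²xy² + a₁²y³` with `(a₀, a₁, b₀, b₁)` not all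
zero, if the point `(b₀ : a₀ : b₁ : a₁)` does not lie on the quadric `t₁t₂ − t₀t₃ = 0`
(i.e. `a₀ b₁ − b₀ a₁ ≠ 0`), then the origin is a singular point of `F = 0` and its
Tyurina algebra `k[[x,y,z]]/(F, Fₓ, F_y, F_z)` has `k`-dimension 8, i.e. the origin is a
rational double point of type `D₄⁰`. -/
theorem stmt7 (k : Type*) [Field k] [IsAlgClosed k] [CharP k 2]
    (a₀ a₁ b₀ b₁ : k) (hne : ¬(a₀ = 0 ∧ a₁ = 0 ∧ b₀ = 0 ∧ b₁ = 0))
    (hquad : a₀ * b₁ - b₀ * a₁ ≠ 0)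
    (F : MvPolynomial (Fin 3) k)
    (hF : F = X 2 ^ 2 + X 0 ^ 4 * X 1 + X 0 * X 1 ^ 4 + C (b₀ ^ 2) * X 0 ^ 3
      + C (a₀ ^ 2) * X 0 ^ 2 * X 1 + C (b₁ ^ 2) * X 0 * X 1 ^ 2 + C (a₁ ^ 2) * X 1 ^ 3) :
    (eval (0 : Fin 3 → k) F = 0 ∧ ∀ i, eval (0 : Fin 3 → k) (pderiv i F) = 0) ∧
    Module.finrank k
      (MvPowerSeries (Fin 3) k ⧸
        Ideal.span {(F : MvPowerSeries (Fin 3) k),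
          ((pderiv 0 F : MvPolynomial (Fin 3) k) : MvPowerSeries (Fin 3) k),
          ((pderiv 1 F : MvPolynomial (Fin 3) k) : MvPowerSeries (Fin 3) k),
          ((pderiv 2 F : MvPolynomial (Fin 3) k) : MvPowerSeries (Fin 3) k)}) = 8 :=
  stmt7_general k a₀ a₁ b₀ b₁ hquad F hF
end

section
/- Let O be a commutative ring, α, β ∈ O with αβ = 2, and let e ∈ O be a unit. Then the Hopf algebras O[X]/(X² − αX) with comultiplication X ↦ X⊗1 + 1⊗X − βX⊗X and O[X']/(X'² − eαX') with comultiplication X' ↦ X'⊗1 + 1⊗X' − e⁻¹βX'⊗X' are isomorphic via X' ↦ eX; i.e. G_{α,β} ≅ G_{eα, e⁻¹β} as group schemes over O. -/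
open Polynomial
open scoped TensorProduct

/-- The Tate–Oort algebra `O[X]/(X² − aX)` underlying the group scheme `G_{a,b}`. -/
abbrev TateOortAlgebra (O : Type*) [CommRing O] (a : O) : Type _ :=
  AdjoinRoot ((X : O[X]) ^ 2 - C a * X)

/-- The generator `X` of the Tate–Oort algebra. -/
noncomputable abbrev TateOortGen (O : Type*) [CommRing O] (a : O) : TateOortAlgebra O a :=
  AdjoinRoot.root _

/-! Substituting `X' = rX` turns `X'² − raX'` into `r²(X² − aX)`, so `X' ↦ uX` is an algebra
isomorphism `O[X']/(X'² − uaX') ≃ O[X]/(X² − aX)` for every unit `u`, and it carries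
`u⁻¹b X'⊗X'` to `u·b X⊗X`, matching the comultiplications. -/

namespace TateOortAlgebra

variable {O : Type*} [CommRing O]

theorem gen_sq (a : O) : TateOortGen O a ^ 2 = a • TateOortGen O a := by
  have h : AdjoinRoot.mk ((X : O[X]) ^ 2 - C a * X) ((X : O[X]) ^ 2 - C a * X) = 0 :=
    AdjoinRoot.mk_self
  rw [map_sub, map_mul, map_pow, AdjoinRoot.mk_X, AdjoinRoot.mk_C, sub_eq_zero] at h
  rw [h, Algebra.smul_def]
  rfl

theorem aeval_smul_gen {a b : O} (r : O) (h : r * a = b) :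
    aeval (r • TateOortGen O a) ((X : O[X]) ^ 2 - C b * X) = 0 := by
  rw [map_sub, map_mul, map_pow, aeval_X, aeval_C, _root_.smul_pow, gen_sq, smul_smul, ← h,
    Algebra.smul_def, Algebra.smul_def, map_mul, map_mul, map_pow, sub_eq_zero]
  ring

noncomputable def scaleHom {a b : O} (r : O) (h : r * a = b) :
    TateOortAlgebra O b →ₐ[O] TateOortAlgebra O a :=
  AdjoinRoot.liftAlgHom _ (Algebra.ofId _ _) (r • TateOortGen O a)
    (by rw [Algebra.toRingHom_ofId, ← aeval_def]; exact aeval_smul_gen r h)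

@[simp]
theorem scaleHom_gen {a b : O} (r : O) (h : r * a = b) :
    scaleHom r h (TateOortGen O b) = r • TateOortGen O a :=
  AdjoinRoot.liftAlgHom_root _ _ _ _

theorem scaleHom_comp_scaleHom {a b c : O} (r s : O) (hab : r * a = b) (hbc : s * b = c) :
    (scaleHom r hab).comp (scaleHom s hbc) =
      scaleHom (r * s) (by rw [← hbc, ← hab]; ring) := by
  apply AdjoinRoot.algHom_ext
  simp only [AlgHom.comp_apply, scaleHom_gen, map_smul, smul_smul, mul_comm s r]

theorem scaleHom_one (a : O) : scaleHom (1 : O) (one_mul a) = AlgHom.id O _ := by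
  apply AdjoinRoot.algHom_ext
  simp only [scaleHom_gen, one_smul, AlgHom.id_apply]

noncomputable def scaleEquiv {a b : O} (u : Oˣ) (h : (u : O) * a = b) :
    TateOortAlgebra O b ≃ₐ[O] TateOortAlgebra O a :=
  AlgEquiv.ofAlgHom (scaleHom u h) (scaleHom (↑u⁻¹ : O) (by rw [← h, u.inv_mul_cancel_left]))
    (by rw [scaleHom_comp_scaleHom, ← scaleHom_one]; simp only [u.mul_inv])
    (by rw [scaleHom_comp_scaleHom, ← scaleHom_one]; simp only [u.inv_mul])

@[simp]
theorem scaleEquiv_gen {a b : O} (u : Oˣ) (h : (u : O) * a = b) :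
    scaleEquiv u h (TateOortGen O b) = (u : O) • TateOortGen O a :=
  scaleHom_gen _ h

end TateOortAlgebra

/-- The comultiplication of `G_{a,b}` on its generator `x`. -/
def tateOortComul {O A : Type*} [CommRing O] [Ring A] [Algebra O A] (b : O) (x : A) :
    A ⊗[O] A :=
  x ⊗ₜ 1 + 1 ⊗ₜ x - b • (x ⊗ₜ x)

theorem tateOortComul_units_smul {O A : Type*} [CommRing O] [Ring A] [Algebra O A]
    (u : Oˣ) (b : O) (x : A) :
    tateOortComul (↑u⁻¹ * b) ((u : O) • x) = (u : O) • tateOortComul b x := by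
  have hcoeff : (↑u⁻¹ * b) * ((u : O) * u) = u * b := by
    linear_combination (b * u) * u.inv_mul
  simp only [tateOortComul, smul_sub, smul_add, TensorProduct.smul_tmul',
    TensorProduct.tmul_smul, smul_smul, hcoeff]

theorem stmt14_general (O : Type*) [CommRing O] (α β : O) (e : Oˣ) :
    ∃ f : TateOortAlgebra O ((e : O) * α) ≃ₐ[O] TateOortAlgebra O α,
      f (TateOortGen O ((e : O) * α)) = (e : O) • TateOortGen O α ∧
      ((e : O) • TateOortGen O α) ⊗ₜ[O] (1 : TateOortAlgebra O α)
          + (1 : TateOortAlgebra O α) ⊗ₜ[O] ((e : O) • TateOortGen O α)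
          - (((e⁻¹ : Oˣ) : O) * β) •
            (((e : O) • TateOortGen O α) ⊗ₜ[O] ((e : O) • TateOortGen O α)) =
        (e : O) • (TateOortGen O α ⊗ₜ[O] (1 : TateOortAlgebra O α)
          + (1 : TateOortAlgebra O α) ⊗ₜ[O] TateOortGen O α
          - β • (TateOortGen O α ⊗ₜ[O] TateOortGen O α)) :=
  ⟨TateOortAlgebra.scaleEquiv e rfl, TateOortAlgebra.scaleEquiv_gen e rfl,
    tateOortComul_units_smul e β (TateOortGen O α)⟩

/-- For `α β : O` with `αβ = 2` and a unit `e`, the Tate–Oort Hopf algebras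
`O[X']/(X'² − eαX')` (comultiplication `X' ↦ X'⊗1 + 1⊗X' − e⁻¹β X'⊗X'`) and
`O[X]/(X² − αX)` (comultiplication `X ↦ X⊗1 + 1⊗X − β X⊗X`) are isomorphic via
`X' ↦ eX`; i.e. `G_{α,β} ≅ G_{eα, e⁻¹β}`.  Compatibility with the comultiplications on
the generator reads `(f⊗f)(Δ'(X')) = Δ(eX)`, both sides written out explicitly (as both
Hopf algebras are generated by their generators, this is equivalent to a Hopf algebra
isomorphism). -/
theorem stmt14 (O : Type*) [CommRing O] (α β : O) (hαβ : α * β = 2) (e : Oˣ) :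
    ∃ f : TateOortAlgebra O ((e : O) * α) ≃ₐ[O] TateOortAlgebra O α,
      f (TateOortGen O ((e : O) * α)) = (e : O) • TateOortGen O α ∧
      ((e : O) • TateOortGen O α) ⊗ₜ[O] (1 : TateOortAlgebra O α)
          + (1 : TateOortAlgebra O α) ⊗ₜ[O] ((e : O) • TateOortGen O α)
          - (((e⁻¹ : Oˣ) : O) * β) •
            (((e : O) • TateOortGen O α) ⊗ₜ[O] ((e : O) • TateOortGen O α)) =
        (e : O) • (TateOortGen O α ⊗ₜ[O] (1 : TateOortAlgebra O α)
          + (1 : TateOortAlgebra O α) ⊗ₜ[O] TateOortGen O α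
          - β • (TateOortGen O α ⊗ₜ[O] TateOortGen O α)) :=
  stmt14_general O α β e
end

section
/- Let k be an algebraically closed field of characteristic 2 and let a₁₀, a₀₁, b₁₀, b₀₁ ∈ k, not all zero. Consider F = z² + x⁴y + xy⁴ + b₁₀²x³ + a₁₀²x²y + b₀₁²xy² + a₀₁²y³ in k[x,y,z]. The singular locus of the affine surface F = 0 is the finite set {(x,y,0) : a(x,y) = b(x,y) = 0} where a = x² + a₁₀x + a₀₁y and b = y² + b₁₀x + b₀₁y; in particular it is contained in the plane z = 0 and has at most 4 points. -/
/-!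
In characteristic 2 the surface is `F = z² + y·a² + x·b²`. Derivatives of squares vanish, so
`∂F/∂x = b²`, `∂F/∂y = a²`, `∂F/∂z = 0`, and a singular point satisfies `a = b = 0`, hence
`z² = F = 0`. The common zeros of the conics `a` and `b` number at most four: if `a₀₁ ≠ 0`,
then `a = 0` gives `y` in terms of `x` and substituting into `b` leaves a monic quartic in `x`;
if `b₁₀ ≠ 0` the same holds with the roles of `x` and `y` exchanged; otherwise `a` and `b` are
quadratics in `x` and `y` separately.
-/

open MvPolynomial

section CharTwo

variable {σ R : Type*} [CommRing R] [CharP R 2]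

theorem MvPolynomial.pderiv_sq_eq_zero (i : σ) (f : MvPolynomial σ R) :
    pderiv i (f ^ 2) = 0 := by
  simp [CharTwo.two_eq_zero]

theorem surface_eq_X_two_sq_add_X_one_mul_sq_add_X_zero_mul_sq (a₁₀ a₀₁ b₁₀ b₀₁ : R) :
    (X 2 ^ 2 + X 0 ^ 4 * X 1 + X 0 * X 1 ^ 4 + C (b₁₀ ^ 2) * X 0 ^ 3
      + C (a₁₀ ^ 2) * X 0 ^ 2 * X 1 + C (b₀₁ ^ 2) * X 0 * X 1 ^ 2 + C (a₀₁ ^ 2) * X 1 ^ 3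
      : MvPolynomial (Fin 3) R) =
    X 2 ^ 2 + X 1 * (X 0 ^ 2 + C a₁₀ * X 0 + C a₀₁ * X 1) ^ 2
      + X 0 * (X 1 ^ 2 + C b₁₀ * X 0 + C b₀₁ * X 1) ^ 2 := by
  simp only [map_pow]
  linear_combination
    (-(X 1 * (C a₁₀ * X 0 ^ 3 + C a₀₁ * X 0 ^ 2 * X 1 + C a₁₀ * C a₀₁ * X 0 * X 1)
      + X 0 * (C b₁₀ * X 0 * X 1 ^ 2 + C b₀₁ * X 1 ^ 3 + C b₁₀ * C b₀₁ * X 0 * X 1))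
      : MvPolynomial (Fin 3) R) * CharTwo.two_eq_zero (R := MvPolynomial (Fin 3) R)

end CharTwo

def singularLocus {σ k : Type*} [CommRing k] (f : MvPolynomial σ k) : Set (σ → k) :=
  {p | eval p f = 0 ∧ ∀ i, eval p (pderiv i f) = 0}

theorem singularLocus_X_two_sq_add_X_one_mul_sq_add_X_zero_mul_sq {k : Type*} [CommRing k]
    [IsDomain k] [CharP k 2] (a b : MvPolynomial (Fin 3) k) :
    singularLocus (X 2 ^ 2 + X 1 * a ^ 2 + X 0 * b ^ 2) =
      {p | eval p a = 0 ∧ eval p b = 0 ∧ p 2 = 0} := by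
  set F := X 2 ^ 2 + X 1 * a ^ 2 + X 0 * b ^ 2
  have hpderiv (i : Fin 3) : pderiv i F = pderiv i (X 1) * a ^ 2 + pderiv i (X 0) * b ^ 2 := by
    simp only [F, map_add, pderiv_mul, pderiv_sq_eq_zero, mul_zero, add_zero, zero_add]
  ext p
  constructor
  · rintro ⟨hF, hd⟩
    have hb : eval p b = 0 := by simpa [hpderiv, pderiv_X] using hd 0
    have ha : eval p a = 0 := by simpa [hpderiv, pderiv_X] using hd 1
    exact ⟨ha, hb, by simpa [F, ha, hb] using hF⟩
  · rintro ⟨ha, hb, hz⟩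
    exact ⟨by simp [F, ha, hb, hz], fun i => by simp [hpderiv, ha, hb]⟩

theorem Polynomial.encard_rootSet_le_natDegree {A : Type*} [CommRing A] (q : Polynomial A)
    (B : Type*) [CommRing B] [IsDomain B] [Algebra A B] :
    (q.rootSet B).encard ≤ q.natDegree := by
  rw [← (q.rootSet_finite B).cast_ncard_eq]
  exact_mod_cast q.ncard_rootSet_le B

section CommonZeros

variable {k : Type*} [CommRing k]

def commonZeros (a₁₀ a₀₁ b₁₀ b₀₁ : k) : Set (k × k) :=
  {q | q.1 ^ 2 + a₁₀ * q.1 + a₀₁ * q.2 = 0 ∧ q.2 ^ 2 + b₁₀ * q.1 + b₀₁ * q.2 = 0}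

theorem commonZeros_eq_preimage_swap (a₁₀ a₀₁ b₁₀ b₀₁ : k) :
    commonZeros a₁₀ a₀₁ b₁₀ b₀₁ = Prod.swap ⁻¹' commonZeros b₀₁ b₁₀ a₀₁ a₁₀ := by
  ext q
  simp only [commonZeros, Set.mem_preimage, Set.mem_ofPred_eq, Prod.fst_swap, Prod.snd_swap]
  constructor <;> rintro ⟨h₁, h₂⟩ <;> exact ⟨by linear_combination h₂, by linear_combination h₁⟩

variable [IsDomain k]

theorem encard_commonZeros_le_four_of_ne_zero (a₁₀ a₀₁ b₁₀ b₀₁ : k) (ha₀₁ : a₀₁ ≠ 0) :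
    (commonZeros a₁₀ a₀₁ b₁₀ b₀₁).encard ≤ 4 := by
  -- `a₀₁ y = -(x² + a₁₀x)`, substituted into `a₀₁² (y² + b₁₀x + b₀₁y) = 0`
  set quadratic : Polynomial k := .X ^ 2 + .C a₁₀ * .X
  set quartic : Polynomial k := quadratic ^ 2 - .C (a₀₁ * b₀₁) * quadratic + .C (a₀₁ ^ 2 * b₁₀) * .X
  have hmonic : quartic.Monic := by unfold quartic quadratic; monicity!
  have hdeg : quartic.natDegree = 4 := by unfold quartic quadratic; compute_degree!
  have hmaps : Set.MapsTo Prod.fst (commonZeros a₁₀ a₀₁ b₁₀ b₀₁) (quartic.rootSet k) := by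
    rintro ⟨x, y⟩ ⟨ha, hb⟩
    rw [Polynomial.mem_rootSet, Polynomial.coe_aeval_eq_eval]
    refine ⟨hmonic.ne_zero, ?_⟩
    simp only [quartic, quadratic, Polynomial.eval_add, Polynomial.eval_sub, Polynomial.eval_mul,
      Polynomial.eval_pow, Polynomial.eval_C, Polynomial.eval_X]
    linear_combination (x ^ 2 + a₁₀ * x - a₀₁ * y - a₀₁ * b₀₁) * ha + a₀₁ ^ 2 * hb
  have hinj : Set.InjOn Prod.fst (commonZeros a₁₀ a₀₁ b₁₀ b₀₁) := by
    rintro ⟨x, y⟩ ⟨ha, -⟩ ⟨x', y'⟩ ⟨ha', -⟩ (rfl : x = x')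
    have : a₀₁ * y = a₀₁ * y' := by linear_combination ha - ha'
    rw [mul_left_cancel₀ ha₀₁ this]
  calc (commonZeros a₁₀ a₀₁ b₁₀ b₀₁).encard ≤ (quartic.rootSet k).encard :=
        Set.encard_le_encard_of_injOn hmaps hinj
    _ ≤ 4 := by exact_mod_cast hdeg ▸ quartic.encard_rootSet_le_natDegree k

theorem encard_commonZeros_zero_zero_le_four (a₁₀ b₀₁ : k) :
    (commonZeros a₁₀ 0 0 b₀₁).encard ≤ 4 := by
  have root_mem {c t : k} (h : t ^ 2 + c * t = 0) : t ∈ ({0, -c} : Set k) := by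
    have : t * (t + c) = 0 := by linear_combination h
    rcases mul_eq_zero.mp this with h₀ | h₁
    · exact .inl h₀
    · exact .inr (eq_neg_of_add_eq_zero_left h₁)
  have encard_pair_le (c : k) : ({0, -c} : Set k).encard ≤ 2 :=
    (Set.encard_insert_le _ _).trans (by norm_num)
  have hsub : commonZeros a₁₀ 0 0 b₀₁ ⊆ ({0, -a₁₀} : Set k) ×ˢ ({0, -b₀₁} : Set k) := by
    rintro ⟨x, y⟩ ⟨ha, hb⟩
    exact ⟨root_mem (by linear_combination ha), root_mem (by linear_combination hb)⟩
  calc (commonZeros a₁₀ 0 0 b₀₁).encard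
      ≤ (({0, -a₁₀} : Set k) ×ˢ ({0, -b₀₁} : Set k)).encard := Set.encard_le_encard hsub
    _ ≤ 2 * 2 := by rw [Set.encard_prod]; gcongr <;> exact encard_pair_le _
    _ = 4 := by norm_num

theorem encard_commonZeros_le_four (a₁₀ a₀₁ b₁₀ b₀₁ : k) :
    (commonZeros a₁₀ a₀₁ b₁₀ b₀₁).encard ≤ 4 := by
  obtain ha₀₁ | rfl := ne_or_eq a₀₁ 0
  · exact encard_commonZeros_le_four_of_ne_zero a₁₀ a₀₁ b₁₀ b₀₁ ha₀₁
  obtain hb₁₀ | rfl := ne_or_eq b₁₀ 0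
  · rw [commonZeros_eq_preimage_swap, Set.encard_preimage_of_bijective Prod.swap_bijective]
    exact encard_commonZeros_le_four_of_ne_zero b₀₁ b₁₀ 0 a₁₀ hb₁₀
  exact encard_commonZeros_zero_zero_le_four a₁₀ b₀₁

end CommonZeros

theorem stmt16_general (k : Type*) [Field k] [CharP k 2]
    (a₁₀ a₀₁ b₁₀ b₀₁ : k)
    (F a b : MvPolynomial (Fin 3) k)
    (hF : F = X 2 ^ 2 + X 0 ^ 4 * X 1 + X 0 * X 1 ^ 4 + C (b₁₀ ^ 2) * X 0 ^ 3
      + C (a₁₀ ^ 2) * X 0 ^ 2 * X 1 + C (b₀₁ ^ 2) * X 0 * X 1 ^ 2 + C (a₀₁ ^ 2) * X 1 ^ 3)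
    (ha : a = X 0 ^ 2 + C a₁₀ * X 0 + C a₀₁ * X 1)
    (hb : b = X 1 ^ 2 + C b₁₀ * X 0 + C b₀₁ * X 1)
    (SingLoc : Set (Fin 3 → k))
    (hS : SingLoc = {p | eval p F = 0 ∧ ∀ i, eval p (pderiv i F) = 0}) :
    SingLoc = {p | eval p a = 0 ∧ eval p b = 0 ∧ p 2 = 0} ∧
    SingLoc.Finite ∧ SingLoc.ncard ≤ 4 := by
  have hsing : SingLoc = {p | eval p a = 0 ∧ eval p b = 0 ∧ p 2 = 0} := by
    rw [hS, hF, surface_eq_X_two_sq_add_X_one_mul_sq_add_X_zero_mul_sq, ← ha, ← hb]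
    exact singularLocus_X_two_sq_add_X_one_mul_sq_add_X_zero_mul_sq a b
  refine ⟨hsing, Set.encard_le_coe_iff_finite_ncard_le.mp ?_⟩
  have hmaps : Set.MapsTo (fun p => (p 0, p 1)) SingLoc (commonZeros a₁₀ a₀₁ b₁₀ b₀₁) := by
    rw [hsing]
    rintro p ⟨hap, hbp, -⟩
    subst ha hb
    simpa [commonZeros] using And.intro hap hbp
  have hinj : Set.InjOn (fun p => (p 0, p 1)) SingLoc := by
    rw [hsing]
    rintro p ⟨-, -, hp⟩ q ⟨-, -, hq⟩ hpq
    obtain ⟨h₀, h₁⟩ := Prod.ext_iff.mp hpq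
    funext i
    fin_cases i <;> simp_all
  exact (Set.encard_le_encard_of_injOn hmaps hinj).trans (encard_commonZeros_le_four ..)

/-- Over an algebraically closed field `k` of characteristic 2, with
`a₁₀, a₀₁, b₁₀, b₀₁` not all zero and
`F = z² + x⁴y + xy⁴ + b₁₀²x³ + a₁₀²x²y + b₀₁²xy² + a₀₁²y³`, the singular locus of the
affine surface `F = 0` is exactly `{(x, y, 0) : a(x,y) = b(x,y) = 0}` where
`a = x² + a₁₀x + a₀₁y` and `b = y² + b₁₀x + b₀₁y`; in particular it is contained in the
plane `z = 0`, is finite, and has at most 4 points. -/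
theorem stmt16 (k : Type*) [Field k] [IsAlgClosed k] [CharP k 2]
    (a₁₀ a₀₁ b₁₀ b₀₁ : k) (hne : ¬(a₁₀ = 0 ∧ a₀₁ = 0 ∧ b₁₀ = 0 ∧ b₀₁ = 0))
    (F a b : MvPolynomial (Fin 3) k)
    (hF : F = X 2 ^ 2 + X 0 ^ 4 * X 1 + X 0 * X 1 ^ 4 + C (b₁₀ ^ 2) * X 0 ^ 3
      + C (a₁₀ ^ 2) * X 0 ^ 2 * X 1 + C (b₀₁ ^ 2) * X 0 * X 1 ^ 2 + C (a₀₁ ^ 2) * X 1 ^ 3)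
    (ha : a = X 0 ^ 2 + C a₁₀ * X 0 + C a₀₁ * X 1)
    (hb : b = X 1 ^ 2 + C b₁₀ * X 0 + C b₀₁ * X 1)
    (SingLoc : Set (Fin 3 → k))
    (hS : SingLoc = {p | eval p F = 0 ∧ ∀ i, eval p (pderiv i F) = 0}) :
    SingLoc = {p | eval p a = 0 ∧ eval p b = 0 ∧ p 2 = 0} ∧
    SingLoc.Finite ∧ SingLoc.ncard ≤ 4 :=
  stmt16_general k a₁₀ a₀₁ b₁₀ b₀₁ F a b hF ha hb SingLoc hS
end

section
/- Let k be a field of characteristic 2 and c ∈ k. On the elliptic curve E_c : Y² + cXY + Y = X³, the substitution u = X/Y and ū = −X/(Y + cX + 1) transforms the equation into u + ū + c·u·ū − (u·ū)² = 0, with the group identity at u = ū = 0 and the inversion map given by exchanging u and ū. -/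
/-!
On a curve `y² + a₁xy + a₃y = x³` the equation factors as `y · ȳ = -x³`, where
`ȳ = -y - a₁x - a₃` is the `y`-coordinate of `-(x, y)`. With `u = x/y` and `ū = x/ȳ`
this gives `uū = -1/x` and `u + ū = (a₁x + a₃)/x²`, hence `u + ū + a₁uū - a₃(uū)² = 0`;
`E_c` is the case `a₁ = c`, `a₃ = 1`. Negation fixes `x` and swaps `y` and `ȳ`, so it
swaps `u` and `ū`.
-/

namespace WeierstrassCurve.Affine

variable {F : Type*} [Field F] {W : Affine F} {x y : F}

lemma mul_negY_eq_neg_cube (h : W.Equation x y) (ha₂ : W.a₂ = 0) (ha₄ : W.a₄ = 0)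
    (ha₆ : W.a₆ = 0) : y * W.negY x y = -x ^ 3 := by
  rw [equation_iff, ha₂, ha₄, ha₆] at h
  rw [negY]
  linear_combination -h

lemma div_negY : x / W.negY x y = -(x / (y + W.a₁ * x + W.a₃)) := by
  rw [negY, ← div_neg]
  ring_nf

theorem div_add_div_negY_add_mul_sub_sq (h : W.Equation x y) (ha₂ : W.a₂ = 0)
    (ha₄ : W.a₄ = 0) (ha₆ : W.a₆ = 0) :
    x / y + x / W.negY x y + W.a₁ * (x / y) * (x / W.negY x y)
      - W.a₃ * (x / y * (x / W.negY x y)) ^ 2 = 0 := by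
  have hprod := mul_negY_eq_neg_cube h ha₂ ha₄ ha₆
  rcases eq_or_ne x 0 with rfl | hx
  · simp
  have hprod_ne : y * W.negY x y ≠ 0 := by rw [hprod]; simpa using hx
  have hy : y ≠ 0 := left_ne_zero_of_mul hprod_ne
  have hy_neg : W.negY x y ≠ 0 := right_ne_zero_of_mul hprod_ne
  have hsum : y + W.negY x y = -W.a₁ * x - W.a₃ := by rw [negY]; ring
  generalize W.negY x y = t at *
  field_simp
  linear_combination x * y * t * hsum - W.a₃ * x * hprod

end WeierstrassCurve.Affine

open WeierstrassCurve.Affine in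
theorem stmt18_general (k : Type*) [Field k] (c X Y : k)
    (hcurve : Y ^ 2 + c * X * Y + Y = X ^ 3)
    (u ub Y' : k)
    (hu : u = X / Y) (hub : ub = -(X / (Y + c * X + 1)))
    (hY' : Y' = -Y - c * X - 1) :
    u + ub + c * u * ub - (u * ub) ^ 2 = 0 ∧
    Y' ^ 2 + c * X * Y' + Y' = X ^ 3 ∧
    X / Y' = ub ∧
    -(X / (Y' + c * X + 1)) = u := by
  let W : WeierstrassCurve.Affine k := ⟨c, 0, 1, 0, 0⟩
  have hP : W.Equation X Y := by simpa [W, equation_iff] using hcurve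
  have hY'_eq : Y' = W.negY X Y := hY'
  have hub_eq : ub = X / Y' := by rw [hub, hY'_eq, div_negY]
  refine ⟨?_, ?_, hub_eq.symm, ?_⟩
  · simpa [hu, hub_eq, hY'_eq, W] using div_add_div_negY_add_mul_sub_sq hP rfl rfl rfl
  · simpa [W, equation_iff, hY'_eq] using (equation_neg X Y).2 hP
  · rw [hu, ← div_negY (W := W), hY'_eq, negY_negY]

/-- Let `k` have characteristic 2 and let `(X, Y)` be a point of
`E_c : Y² + cXY + Y = X³` with `Y ≠ 0` and `Y + cX + 1 ≠ 0`.  Setting `u = X/Y` and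
`ū = −X/(Y + cX + 1)`, the equation becomes `u + ū + c·u·ū − (u·ū)² = 0`; moreover the
inverse point `(X, Y')` with `Y' = −Y − cX − 1 = Y + cX + 1` lies on the curve and its
pair of coordinates `(X/Y', −X/(Y' + cX + 1))` is `(ū, u)`, i.e. the inversion map
exchanges `u` and `ū`. -/
theorem stmt18 (k : Type*) [Field k] [CharP k 2] (c X Y : k)
    (hcurve : Y ^ 2 + c * X * Y + Y = X ^ 3)
    (hY : Y ≠ 0) (hD : Y + c * X + 1 ≠ 0)
    (u ub Y' : k)
    (hu : u = X / Y) (hub : ub = -(X / (Y + c * X + 1)))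
    (hY' : Y' = -Y - c * X - 1) :
    u + ub + c * u * ub - (u * ub) ^ 2 = 0 ∧
    Y' ^ 2 + c * X * Y' + Y' = X ^ 3 ∧
    X / Y' = ub ∧
    -(X / (Y' + c * X + 1)) = u :=
  stmt18_general k c X Y hcurve u ub Y' hu hub hY'
end
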